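/- Let G be a simple graph containing four distinct vertices u, v, w_1, w_2 such that uv, uw_1, vw_1, uw_2, vw_2 are all edges of G (so uvw_1 and uvw_2 are triangles sharing the edge uv). Let G' be the graph obtained from G by deleting the edge uv, adding a new vertex z, and adding the edges uz, zv, zw_1, zw_2 (i.e., G' is obtained by subdividing the edge uv with z and joining z to w_1 and w_2). If G' is 2-edge-hamiltonian-connected, then G is hamiltonian-connected. -/

import Mathlib

/-!
Given `x ≠ y`, apply the 2-edge-hamiltonian-connectivity of `G'` to `X = {xy, zu}`. Cutting
the resulting Hamiltonian cycle at `zu` gives a Hamiltonian path from `z` to `u` whose first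
edge is `ze` with `e ∈ {v, w₁, w₂}` (not `u`, as `zu` is used only once). Deleting `z` leaves
a Hamiltonian path of `G + xy` from `e` to `u` through `xy`. Since `ue` is an edge of `G`,
closing this path by `ue` and reopening it at `xy` gives a Hamiltonian path of `G` from `x`
to `y`.
-/

open SimpleGraph

/-- The graph `G'` obtained from `G` by deleting the edge `uv`, adding a new
vertex `z` (here `none : Option V`) and adding the edges `uz`, `zv`, `zw₁`, `zw₂`
(i.e. subdividing the edge `uv` with `z` and joining `z` to `w₁` and `w₂`). -/
def subdivideEdge {V : Type*} (G : SimpleGraph V) (u v w₁ w₂ : V) :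
    SimpleGraph (Option V) where
  Adj a b := match a, b with
    | some a, some b => G.Adj a b ∧ ¬(a = u ∧ b = v) ∧ ¬(a = v ∧ b = u)
    | some a, none => a = u ∨ a = v ∨ a = w₁ ∨ a = w₂
    | none, some b => b = u ∨ b = v ∨ b = w₁ ∨ b = w₂
    | none, none => False
  symm := by
    constructor
    rintro (_ | a) (_ | b) h
    · exact h
    · exact h
    · exact h
    · exact ⟨h.1.symm, fun hc => h.2.2 ⟨hc.2, hc.1⟩, fun hc => h.2.1 ⟨hc.2, hc.1⟩⟩
  loopless := by
    constructor
    rintro (_ | a) h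
    · exact h
    · exact G.irrefl h.1

/-- A graph is hamiltonian-connected if every pair of distinct vertices is joined
by a Hamiltonian path. -/
def HamiltonianConnected {V : Type*} [DecidableEq V] (G : SimpleGraph V) : Prop :=
  ∀ x y : V, x ≠ y → ∃ p : G.Walk x y, p.IsHamiltonian

/-- A graph `H` is 2-edge-hamiltonian-connected if for every nonempty set `X` of
at most 2 edges (pairs of distinct vertices of `H`) such that the graph induced
by `X` on the vertices of `H` is a forest each of whose components is a path
(equivalently: acyclic with all degrees at most 2), the graph `H ∪ X` has a
Hamiltonian cycle containing all edges of `X`. -/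
def TwoEdgeHamiltonianConnected {W : Type*} [DecidableEq W] (H : SimpleGraph W) : Prop :=
  ∀ X : Finset (Sym2 W), (∀ e ∈ X, ¬ e.IsDiag) → 1 ≤ X.card → X.card ≤ 2 →
    (fromEdgeSet (↑X : Set (Sym2 W))).IsAcyclic →
    (∀ w : W, ((fromEdgeSet (↑X : Set (Sym2 W))).neighborSet w).ncard ≤ 2) →
    ∃ (a : W) (C : (H ⊔ fromEdgeSet (↑X : Set (Sym2 W))).Walk a a),
      C.IsHamiltonianCycle ∧ ∀ e ∈ X, e ∈ C.edges

namespace SimpleGraph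

variable {α β : Type*}

lemma isAcyclic_fromEdgeSet_of_card_le_two (X : Finset (Sym2 α)) (hX : X.card ≤ 2) :
    (fromEdgeSet (X : Set (Sym2 α))).IsAcyclic := by
  classical
  intro w c hc
  have hsub : c.edges.toFinset ⊆ X := fun e he => by
    have := c.edges_subset_edgeSet (List.mem_toFinset.mp he)
    rw [edgeSet_fromEdgeSet] at this
    exact this.1
  have hcard := Finset.card_le_card hsub
  rw [List.toFinset_card_of_nodup hc.edges_nodup, Walk.length_edges] at hcard
  have := hc.three_le_length
  omega

lemma ncard_neighborSet_fromEdgeSet_le_card (X : Finset (Sym2 α)) (w : α) :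
    ((fromEdgeSet (X : Set (Sym2 α))).neighborSet w).ncard ≤ X.card := by
  rw [← Set.ncard_coe_finset]
  refine Set.ncard_le_ncard_of_injOn (fun n => s(w, n)) (fun n hn => ?_)
    (fun _ _ _ _ h => Sym2.congr_right.mp h) X.finite_toSet
  rw [mem_neighborSet, fromEdgeSet_adj] at hn
  exact hn.1

lemma TwoEdgeHamiltonianConnected.exists_isHamiltonianCycle [DecidableEq α]
    {H : SimpleGraph α} (hH : TwoEdgeHamiltonianConnected H) {X : Finset (Sym2 α)}
    (hdiag : ∀ e ∈ X, ¬e.IsDiag) (hne : X.Nonempty) (hX : X.card ≤ 2) :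
    ∃ (a : α) (C : (H ⊔ fromEdgeSet (X : Set (Sym2 α))).Walk a a),
      C.IsHamiltonianCycle ∧ ∀ e ∈ X, e ∈ C.edges :=
  hH X hdiag hne.card_pos hX (isAcyclic_fromEdgeSet_of_card_le_two X hX)
    fun w => (ncard_neighborSet_fromEdgeSet_le_card X w).trans hX

lemma mem_edgeSet_of_mem_edgeSet_sup_edge {G : SimpleGraph α} {x y : α} {e : Sym2 α}
    (he : e ∈ (G ⊔ edge x y).edgeSet) (hne : e ≠ s(x, y)) : e ∈ G.edgeSet := by
  rw [edgeSet_sup] at he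
  exact he.resolve_right fun h => hne (edgeSet_edge_subset h)

namespace Walk

variable {G : SimpleGraph α}

lemma exists_eq_append_cons_of_mem_edges {u v x y : α} {p : G.Walk u v}
    (he : s(x, y) ∈ p.edges) :
    ∃ (a b : α) (q : G.Walk u a) (h : G.Adj a b) (r : G.Walk b v),
      s(a, b) = s(x, y) ∧ p = q.append (cons h r) := by
  induction p with
  | nil => simp at he
  | @cons u w v h p ih =>
    rw [edges_cons, List.mem_cons] at he
    by_cases hxy : s(x, y) = s(u, w)
    · exact ⟨u, w, nil, h, p, hxy.symm, rfl⟩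
    · obtain ⟨a, b, q, h', r, hab, rfl⟩ := ih (he.resolve_left hxy)
      exact ⟨a, b, cons h q, h', r, hab, rfl⟩

lemma support_append_perm_support_tail {a b c : α} (q : G.Walk c a) (h : G.Adj a b)
    (r : G.Walk b c) : (r.append q).support.Perm (q.append (cons h r)).support.tail := by
  rw [support_append, support_append, support_cons, List.tail_cons, ← cons_tail_support q,
    List.cons_append, List.tail_cons]
  exact List.perm_append_comm

lemma edges_append_perm {a b c : α} (q : G.Walk c a) (h : G.Adj a b) (r : G.Walk b c) :
    (s(a, b) :: (r.append q).edges).Perm (q.append (cons h r)).edges := by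
  rw [edges_append, edges_append, edges_cons]
  exact (List.perm_append_comm.cons _).trans List.perm_middle.symm

lemma exists_map_comap_eq {H : SimpleGraph β} {f : α → β} (hf : f.Injective) {a b : α}
    (p : H.Walk (f a) (f b)) (hp : ∀ w ∈ p.support, w ∈ Set.range f) :
    ∃ q : (H.comap f).Walk a b, q.map (Hom.comap f H) = p := by
  suffices ∀ {u v : β} (p : H.Walk u v), (∀ w ∈ p.support, w ∈ Set.range f) →
      ∀ a b (ha : f a = u) (hb : f b = v),
        ∃ q : (H.comap f).Walk a b, q.map (Hom.comap f H) = p.copy ha.symm hb.symm from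
    this p hp a b rfl rfl
  intro u v p
  induction p with
  | nil =>
    rintro - a b rfl hb
    obtain rfl := hf hb
    exact ⟨nil, rfl⟩
  | cons h p ih =>
    rintro hp a b rfl rfl
    obtain ⟨c, rfl⟩ := hp _ (List.mem_cons_of_mem _ p.start_mem_support)
    obtain ⟨q, hq⟩ := ih (fun w hw => hp w (List.mem_cons_of_mem _ hw)) c b rfl rfl
    exact ⟨cons (comap_adj.mpr h) q, by rw [map_cons, hq]; rfl⟩

lemma IsPath.exists_isHamiltonian_comap [DecidableEq α] {H : SimpleGraph β} {f : α → β}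
    (hf : f.Injective) {a b : α} {p : H.Walk (f a) (f b)} (hp : p.IsPath)
    (hsupp : ∀ w, w ∈ p.support ↔ w ∈ Set.range f) :
    ∃ q : (H.comap f).Walk a b, q.IsHamiltonian ∧ q.edges.map (Sym2.map f) = p.edges := by
  obtain ⟨q, rfl⟩ := exists_map_comap_eq hf p fun w => (hsupp w).mp
  refine ⟨q, hp.of_map.isHamiltonian_of_mem fun w => ?_, (edges_map (Hom.comap f H) q).symm⟩
  obtain ⟨w', hw', hww'⟩ := List.mem_map.mp (support_map _ q ▸ (hsupp (f w)).mpr ⟨w, rfl⟩)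
  exact hf hww' ▸ hw'

variable [DecidableEq α]

lemma IsHamiltonian.reverse {a b : α} {p : G.Walk a b} (hp : p.IsHamiltonian) :
    p.reverse.IsHamiltonian := fun v => by
  rw [support_reverse, List.count_reverse]
  exact hp v

lemma IsHamiltonianCycle.exists_isHamiltonian_perm_edges {c x y : α} {C : G.Walk c c}
    (hC : C.IsHamiltonianCycle) (he : s(x, y) ∈ C.edges) :
    ∃ p : G.Walk x y, p.IsHamiltonian ∧ (s(x, y) :: p.edges).Perm C.edges := by
  obtain ⟨a, b, q, h, r, hab, rfl⟩ := exists_eq_append_cons_of_mem_edges he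
  have hham : (r.append q).IsHamiltonian := fun v =>
    ((support_append_perm_support_tail q h r).count_eq v).trans
      ((isHamiltonianCycle_iff_isCycle_and_support_count_tail_eq_one.mp hC).2 v)
  rcases Sym2.eq_iff.mp hab with ⟨rfl, rfl⟩ | ⟨rfl, rfl⟩
  · refine ⟨(r.append q).reverse, hham.reverse, ?_⟩
    rw [edges_reverse]
    exact ((List.reverse_perm _).cons _).trans (edges_append_perm q h r)
  · exact ⟨r.append q, hham, Sym2.eq_swap ▸ edges_append_perm q h r⟩

lemma IsHamiltonian.exists_isHamiltonian_of_mem_edges_sup_edge {b c x y : α}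
    {P : (G ⊔ edge x y).Walk b c} (hP : P.IsHamiltonian) (hxy : s(x, y) ∈ P.edges)
    (hcb : G.Adj c b) : ∃ Q : G.Walk x y, Q.IsHamiltonian := by
  obtain ⟨a, a', q, h, r, hab, rfl⟩ := exists_eq_append_cons_of_mem_edges hxy
  have hPedges : (q.append (cons h r)).edges.Perm (s(a, a') :: (q.edges ++ r.edges)) := by
    rw [edges_append, edges_cons]
    exact List.perm_middle
  have hfree : s(x, y) ∉ q.edges ++ r.edges :=
    hab ▸ (List.nodup_cons.mp (hPedges.nodup_iff.mp hP.isPath.isTrail.edges_nodup)).1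
  have hqr : ∀ e ∈ q.edges ++ r.edges, e ∈ G.edgeSet := fun e he =>
    mem_edgeSet_of_mem_edgeSet_sup_edge
      (edges_subset_edgeSet _ (hPedges.symm.subset (List.mem_cons_of_mem _ he)))
      fun hexy => hfree (hexy ▸ he)
  -- close `P` into a cycle by the edge `cb` of `G` and reopen it at `xy`
  let W := r.append (cons ((sup_adj _ _ _ _).mpr (Or.inl hcb)) q)
  have hWG : ∀ e ∈ W.edges, e ∈ G.edgeSet := by
    intro e he
    simp only [W, edges_append, edges_cons, List.mem_append, List.mem_cons] at he
    rcases he with he | rfl | he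
    · exact hqr e (List.mem_append_right _ he)
    · exact hcb
    · exact hqr e (List.mem_append_left _ he)
  have hW : (W.transfer G hWG).IsHamiltonian := fun v => by
    rw [support_transfer]
    exact ((support_append_perm_support_tail _ h r).count_eq v).trans (hP v)
  rcases Sym2.eq_iff.mp hab with ⟨rfl, rfl⟩ | ⟨rfl, rfl⟩
  · exact ⟨_, hW.reverse⟩
  · exact ⟨_, hW⟩

lemma IsHamiltonianCycle.exists_isHamiltonian_comap_some {H : SimpleGraph (Option α)}
    {c : Option α} {C : H.Walk c c} (hC : C.IsHamiltonianCycle) {u : α}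
    (hu : s(none, some u) ∈ C.edges) :
    ∃ e : α, e ≠ u ∧ H.Adj none (some e) ∧ ∃ q : (H.comap some).Walk e u,
      q.IsHamiltonian ∧ ∀ x y : α, s(some x, some y) ∈ C.edges → s(x, y) ∈ q.edges := by
  obtain ⟨p, hp, hperm⟩ := hC.exists_isHamiltonian_perm_edges hu
  obtain ⟨e, h, p, rfl⟩ := p.exists_eq_cons_of_ne (by simp)
  obtain ⟨hpath, hnone⟩ := (cons_isPath_iff h p).mp hp.isPath
  obtain ⟨e, rfl⟩ :=
    Option.ne_none_iff_exists'.mp (ne_of_mem_of_not_mem p.start_mem_support hnone)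
  have hsupp : ∀ w, w ∈ p.support ↔ w ∈ Set.range some := fun w =>
    ⟨fun hw => Option.ne_none_iff_exists.mp (ne_of_mem_of_not_mem hw hnone), by
      rintro ⟨w, rfl⟩
      simpa using hp.mem_support (some w)⟩
  obtain ⟨q, hq, hqp⟩ := hpath.exists_isHamiltonian_comap (Option.some_injective α) hsupp
  refine ⟨e, ?_, h, q, hq, fun x y hxy => ?_⟩
  · rintro rfl
    simpa using hperm.nodup_iff.mpr hC.edges_nodup
  · have hmem := hperm.symm.subset hxy
    simp only [edges_cons, List.mem_cons, ← hqp] at hmem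
    rw [← Sym2.map_mk,
      List.mem_map_of_injective (Sym2.map.injective (Option.some_injective α))] at hmem
    simpa using hmem

end Walk

end SimpleGraph

theorem stmt_3_general {V : Type*} [DecidableEq V] (G : SimpleGraph V) (u v w₁ w₂ : V)
    (huv : G.Adj u v) (huw₁ : G.Adj u w₁)
    (huw₂ : G.Adj u w₂)
    (hG' : TwoEdgeHamiltonianConnected (subdivideEdge G u v w₁ w₂)) :
    HamiltonianConnected G := by
  intro x y hxy
  let X : Finset (Sym2 (Option V)) := {s(some x, some y), s(none, some u)}
  obtain ⟨c, C, hC, hXC⟩ := hG'.exists_isHamiltonianCycle (X := X) (by simp [X, hxy])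
    (by simp [X]) Finset.card_le_two
  obtain ⟨e, heu, hze, q, hq, hqxy⟩ :=
    hC.exists_isHamiltonian_comap_some (u := u) (hXC _ (by simp [X]))
  have hue : G.Adj u e := by
    rcases hze with (rfl | rfl | rfl | rfl) | ⟨hX, -⟩
    · exact absurd rfl heu
    · exact huv
    · exact huw₁
    · exact huw₂
    · exact absurd (by simpa [X] using hX) heu
  have hle :
      (subdivideEdge G u v w₁ w₂ ⊔ fromEdgeSet (X : Set (Sym2 (Option V)))).comap some ≤
        G ⊔ edge x y := by
    rintro a b (hab | ⟨hX, hne⟩)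
    · exact Or.inl hab.1
    · have hab : s(a, b) = s(x, y) := by simpa [X] using hX
      exact Or.inr ((edge_adj x y a b).mpr ⟨Sym2.eq_iff.mp hab, fun h => hne (congrArg some h)⟩)
  exact (hq.map (Hom.ofLE hle) Function.bijective_id).exists_isHamiltonian_of_mem_edges_sup_edge
    (by simpa [Walk.edges_map] using hqxy x y (hXC _ (by simp [X]))) hue

/-- if `G` contains two triangles `u v w₁` and `u v w₂` sharing the
edge `uv`, and the graph `G'` obtained by subdividing `uv` with a new vertex `z`
and joining `z` to `w₁` and `w₂` is 2-edge-hamiltonian-connected, then `G` is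
hamiltonian-connected. -/
theorem stmt_3 {V : Type*} [DecidableEq V] (G : SimpleGraph V) (u v w₁ w₂ : V)
    (hdist : [u, v, w₁, w₂].Nodup)
    (huv : G.Adj u v) (huw₁ : G.Adj u w₁) (hvw₁ : G.Adj v w₁)
    (huw₂ : G.Adj u w₂) (hvw₂ : G.Adj v w₂)
    (hG' : TwoEdgeHamiltonianConnected (subdivideEdge G u v w₁ w₂)) :
    HamiltonianConnected G :=
  stmt_3_general G u v w₁ w₂ huv huw₁ huw₂ hG'
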